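/- Let 𝒜 be a complex Banach algebra, let L₀, L₁, L₂, L₃ ∈ 𝒜 with ‖Lₖ‖ ≤ Λ for every k, let t ≥ 0, let N ≥ 1 be a natural number, and set τ = t/N. Define S₂(τ) = e^{(τ/2)L₀} e^{(τ/2)L₁} e^{(τ/2)L₂} e^{(τ/2)L₃} e^{(τ/2)L₃} e^{(τ/2)L₂} e^{(τ/2)L₁} e^{(τ/2)L₀}. Assume moreover that ‖exp(τ(L₀+L₁+L₂+L₃))‖ ≤ 1 and ‖S₂(τ)‖ ≤ 1 (as holds when these elements are quantum channels measured in the 1→1 superoperator norm). Then ‖exp(t(L₀+L₁+L₂+L₃)) − S₂(τ)^N‖ ≤ ((4tΛ)³/(3N²)) · e^{4tΛ/N}. In particular, for any ε ≥ ((4tΛ)³/(3N²)) · e^{4tΛ/N}, the error ‖exp(t(L₀+L₁+L₂+L₃)) − S₂(τ)^N‖ is at most ε. -/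

import Mathlib

/-!
Let `pₙ(y₁, …, yₘ)` be the degree-`n` Taylor coefficient of `e^{y₁} ⋯ e^{yₘ}`, a Cauchy product of
exponential series. If `‖yᵢ‖ ≤ β` then `‖pₙ‖ ≤ (mβ)ⁿ/n!`. For a palindromic word `y₁ ⋯ yₘ yₘ ⋯ y₁`
the coefficients of order `0, 1, 2` coincide with those of `e^{2(y₁ + ⋯ + yₘ)}`: in order two, the
cross terms `yᵢyⱼ` (`i < j`) of the word and `yⱼyᵢ` of its mirror image add up to the square of the
sum. So one step of the symmetric splitting is off by at most `2 ∑_{n ≥ 3} xⁿ/n! ≤ x³/3 · eˣ` with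
`x = 4τΛ`. Both one-step operators are contractions, so the `N` local errors just add up.
-/
open NormedSpace

/-- The second-order Suzuki–Lie–Trotter product formula
`S₂(τ) = e^{(τ/2)L₀} e^{(τ/2)L₁} e^{(τ/2)L₂} e^{(τ/2)L₃} e^{(τ/2)L₃} e^{(τ/2)L₂}
e^{(τ/2)L₁} e^{(τ/2)L₀}` for four generators in a complex Banach algebra. -/
noncomputable def trotterS2 {𝒜 : Type*} [NormedRing 𝒜] [NormedAlgebra ℂ 𝒜]
    (L₀ L₁ L₂ L₃ : 𝒜) (τ : ℝ) : 𝒜 :=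
  exp (((τ / 2 : ℝ) : ℂ) • L₀) * exp (((τ / 2 : ℝ) : ℂ) • L₁) *
    exp (((τ / 2 : ℝ) : ℂ) • L₂) * exp (((τ / 2 : ℝ) : ℂ) • L₃) *
    exp (((τ / 2 : ℝ) : ℂ) • L₃) * exp (((τ / 2 : ℝ) : ℂ) • L₂) *
    exp (((τ / 2 : ℝ) : ℂ) • L₁) * exp (((τ / 2 : ℝ) : ℂ) • L₀)

open Finset Nat

lemma sum_antidiagonal_pow_div_factorial_mul (a b : ℝ) (n : ℕ) :
    ∑ ij ∈ antidiagonal n, a ^ ij.1 / ij.1 ! * (b ^ ij.2 / ij.2 !) = (a + b) ^ n / n ! := by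
  rw [(Commute.all a b).add_pow', sum_div]
  refine sum_congr rfl fun ij hij ↦ ?_
  rw [← HasAntidiagonal.mem_antidiagonal.mp hij, nsmul_eq_mul, Nat.cast_add_choose]
  field_simp

lemma norm_list_sum_le_length_mul {E : Type*} [SeminormedAddCommGroup E] {l : List E} {β : ℝ}
    (hl : ∀ y ∈ l, ‖y‖ ≤ β) : ‖l.sum‖ ≤ l.length * β := by
  induction l with
  | nil => simp
  | cons y l ih =>
    obtain ⟨hy, hl⟩ := List.forall_mem_cons.mp hl
    rw [List.sum_cons, List.length_cons, Nat.cast_succ]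
    linarith [norm_add_le y l.sum, ih hl]

lemma norm_sub_le_of_hasSum_of_eq_of_lt {E : Type*} [SeminormedAddCommGroup E] {a b : ℕ → E}
    {A B : E} {x : ℝ} {k : ℕ} (hA : HasSum a A) (hB : HasSum b B) (hx : 0 ≤ x)
    (hab : ∀ n < k, a n = b n) (ha : ∀ n, k ≤ n → ‖a n‖ ≤ x ^ n / n !)
    (hb : ∀ n, k ≤ n → ‖b n‖ ≤ x ^ n / n !) :
    ‖A - B‖ ≤ 2 * (x ^ k / k !) * Real.exp x := by
  have htail : HasSum (fun m ↦ a (m + k) - b (m + k)) (A - B) := by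
    have hlow : ∑ i ∈ range k, (a i - b i) = 0 :=
      sum_eq_zero fun i hi ↦ sub_eq_zero.mpr (hab i (mem_range.mp hi))
    simpa [hlow] using (hasSum_nat_add_iff' k).mpr (hA.sub hB)
  have hexp : HasSum (fun m ↦ 2 * (x ^ k / k !) * (x ^ m / m !)) (2 * (x ^ k / k !) * Real.exp x) :=
    Real.exp_eq_exp_ℝ ▸ (expSeries_div_hasSum_exp x).mul_left _
  refine htail.norm_le_of_bounded hexp fun m ↦ ?_
  have hfac : (k ! * m ! : ℝ) ≤ (k + m)! := by
    exact_mod_cast Nat.le_of_dvd (factorial_pos _) (factorial_mul_factorial_dvd_factorial_add k m)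
  calc ‖a (m + k) - b (m + k)‖ ≤ ‖a (m + k)‖ + ‖b (m + k)‖ := norm_sub_le _ _
    _ ≤ 2 * (x ^ (m + k) / (m + k)!) := by
        linarith [ha (m + k) (Nat.le_add_left k m), hb (m + k) (Nat.le_add_left k m)]
    _ ≤ 2 * (x ^ (k + m) / (k ! * m !)) := by rw [add_comm m k]; gcongr
    _ = 2 * (x ^ k / k !) * (x ^ m / m !) := by rw [pow_add]; ring

lemma norm_pow_sub_pow_le_of_norm_le_one {R : Type*} [SeminormedRing R] {a b : R} (ha : ‖a‖ ≤ 1)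
    (hb : ‖b‖ ≤ 1) (n : ℕ) : ‖a ^ n - b ^ n‖ ≤ n * ‖a - b‖ := by
  obtain _ | n := n
  · simp
  induction n with
  | zero => simp
  | succ n ih =>
    have hbn : ‖b ^ (n + 1)‖ ≤ 1 :=
      (norm_pow_le' b n.succ_pos).trans (pow_le_one₀ (norm_nonneg b) hb)
    calc ‖a ^ (n + 2) - b ^ (n + 2)‖
        = ‖a * (a ^ (n + 1) - b ^ (n + 1)) + (a - b) * b ^ (n + 1)‖ := by
          rw [pow_succ' a, pow_succ' b, mul_sub, sub_mul, sub_add_sub_cancel]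
      _ ≤ ‖a‖ * ‖a ^ (n + 1) - b ^ (n + 1)‖ + ‖a - b‖ * ‖b ^ (n + 1)‖ :=
          (norm_add_le _ _).trans (add_le_add (norm_mul_le _ _) (norm_mul_le _ _))
      _ ≤ 1 * ((n + 1 : ℕ) * ‖a - b‖) + ‖a - b‖ * 1 := by gcongr
      _ = (n + 2 : ℕ) * ‖a - b‖ := by push_cast; ring

section ExpCoeff

variable {𝒜 : Type*} [NormedRing 𝒜] [NormedAlgebra ℝ 𝒜]

noncomputable def expCoeff (y : 𝒜) (n : ℕ) : 𝒜 := (n ! : ℝ)⁻¹ • y ^ n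

@[simp] lemma expCoeff_zero (y : 𝒜) : expCoeff y 0 = 1 := by simp [expCoeff]

@[simp] lemma expCoeff_one (y : 𝒜) : expCoeff y 1 = y := by simp [expCoeff]

@[simp] lemma expCoeff_two (y : 𝒜) : expCoeff y 2 = (2 : ℝ)⁻¹ • y ^ 2 := by
  simp [expCoeff]

lemma norm_expCoeff_le {y : 𝒜} {x : ℝ} (hy : ‖y‖ ≤ x) {n : ℕ} (hn : n ≠ 0) :
    ‖expCoeff y n‖ ≤ x ^ n / n ! := by
  rw [expCoeff, norm_smul, norm_inv, RCLike.norm_natCast, inv_mul_eq_div]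
  gcongr
  exact (norm_pow_le' y (Nat.pos_of_ne_zero hn)).trans (pow_le_pow_left₀ (norm_nonneg y) hy n)

lemma summable_norm_expCoeff (y : 𝒜) : Summable fun n ↦ ‖expCoeff y n‖ :=
  norm_expSeries_summable' (𝕂 := ℝ) y

lemma hasSum_expCoeff [CompleteSpace 𝒜] (y : 𝒜) : HasSum (expCoeff y) (exp y) :=
  exp_series_hasSum_exp' (𝕂 := ℝ) y

noncomputable def prodExpCoeff : List 𝒜 → ℕ → 𝒜
  | [], n => if n = 0 then 1 else 0
  | y :: l, n => ∑ ij ∈ antidiagonal n, expCoeff y ij.1 * prodExpCoeff l ij.2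

@[simp] lemma prodExpCoeff_zero (l : List 𝒜) : prodExpCoeff l 0 = 1 := by
  induction l with
  | nil => rfl
  | cons y l ih => simp [prodExpCoeff, ih]

@[simp] lemma prodExpCoeff_one (l : List 𝒜) : prodExpCoeff l 1 = l.sum := by
  induction l with
  | nil => rfl
  | cons y l ih => simp [prodExpCoeff, Finset.Nat.sum_antidiagonal_succ, ih, add_comm]

lemma prodExpCoeff_two_cons (y : 𝒜) (l : List 𝒜) :
    prodExpCoeff (y :: l) 2 = prodExpCoeff l 2 + y * l.sum + (2 : ℝ)⁻¹ • y ^ 2 := by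
  simp [prodExpCoeff, Finset.Nat.sum_antidiagonal_succ]
  abel

lemma prodExpCoeff_two_append_singleton (l : List 𝒜) (y : 𝒜) :
    prodExpCoeff (l ++ [y]) 2 = prodExpCoeff l 2 + l.sum * y + (2 : ℝ)⁻¹ • y ^ 2 := by
  induction l with
  | nil => simp [prodExpCoeff_two_cons]
  | cons z l ih =>
    simp only [List.cons_append, prodExpCoeff_two_cons, ih, List.sum_append, List.sum_cons,
      List.sum_nil]
    noncomm_ring

lemma prodExpCoeff_two_append_reverse (l : List 𝒜) :
    prodExpCoeff (l ++ l.reverse) 2 = (2 : ℝ)⁻¹ • (l ++ l.reverse).sum ^ 2 := by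
  induction l with
  | nil => simp; rfl
  | cons y l ih =>
    rw [List.reverse_cons, List.cons_append, ← List.append_assoc, prodExpCoeff_two_cons,
      prodExpCoeff_two_append_singleton, ih]
    simp only [List.sum_cons, List.sum_append, List.sum_reverse, List.sum_nil, add_zero, pow_two,
      add_mul, mul_add, smul_add]
    module

lemma summable_norm_prodExpCoeff (l : List 𝒜) : Summable fun n ↦ ‖prodExpCoeff l n‖ := by
  induction l with
  | nil =>
    refine summable_of_ne_finset_zero (s := {0}) fun n hn ↦ ?_
    simp_all [prodExpCoeff]
  | cons y l ih =>
    exact summable_norm_sum_mul_antidiagonal_of_summable_norm (summable_norm_expCoeff y) ih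

lemma hasSum_prodExpCoeff [CompleteSpace 𝒜] (l : List 𝒜) :
    HasSum (prodExpCoeff l) (l.map exp).prod := by
  induction l with
  | nil => exact hasSum_ite_eq 0 1
  | cons y l ih =>
    rw [List.map_cons, List.prod_cons, ← (hasSum_expCoeff y).tsum_eq, ← ih.tsum_eq,
      tsum_mul_tsum_eq_tsum_sum_antidiagonal_of_summable_norm (summable_norm_expCoeff y)
        (summable_norm_prodExpCoeff l)]
    exact (summable_norm_prodExpCoeff (y :: l)).of_norm.hasSum

lemma norm_prodExpCoeff_le {l : List 𝒜} {β : ℝ} (hl : ∀ y ∈ l, ‖y‖ ≤ β) {n : ℕ} (hn : n ≠ 0) :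
    ‖prodExpCoeff l n‖ ≤ (l.length * β) ^ n / n ! := by
  induction l generalizing n with
  | nil => simp [prodExpCoeff, hn]
  | cons y l ih =>
    obtain ⟨hy, hl⟩ := List.forall_mem_cons.mp hl
    have hβ : 0 ≤ β := (norm_nonneg y).trans hy
    have hterm : ∀ ij ∈ antidiagonal n, ‖expCoeff y ij.1 * prodExpCoeff l ij.2‖ ≤
        β ^ ij.1 / ij.1 ! * ((l.length * β) ^ ij.2 / ij.2 !) := by
      intro ⟨i, j⟩ hij
      rw [HasAntidiagonal.mem_antidiagonal] at hij
      rcases eq_or_ne i 0 with rfl | hi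
      · rw [zero_add] at hij
        subst hij
        simpa using ih hl hn
      rcases eq_or_ne j 0 with rfl | hj
      · simpa using norm_expCoeff_le hy hi
      refine (norm_mul_le _ _).trans ?_
      exact mul_le_mul (norm_expCoeff_le hy hi) (ih hl hj) (norm_nonneg _) (by positivity)
    calc ‖prodExpCoeff (y :: l) n‖
        ≤ ∑ ij ∈ antidiagonal n, β ^ ij.1 / ij.1 ! * ((l.length * β) ^ ij.2 / ij.2 !) :=
          (norm_sum_le _ _).trans (sum_le_sum hterm)
      _ = ((y :: l).length * β) ^ n / n ! := by
          rw [sum_antidiagonal_pow_div_factorial_mul, List.length_cons]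
          push_cast
          ring_nf

theorem norm_exp_sum_sub_prod_exp_append_reverse_le [CompleteSpace 𝒜] (l : List 𝒜) {β : ℝ}
    (hl : ∀ y ∈ l, ‖y‖ ≤ β) :
    ‖exp (l ++ l.reverse).sum - ((l ++ l.reverse).map exp).prod‖ ≤
      (2 * l.length * β) ^ 3 / 3 * Real.exp (2 * l.length * β) := by
  set m := l ++ l.reverse
  have hm : ∀ y ∈ m, ‖y‖ ≤ β := by
    simpa [m, or_imp, forall_and] using hl
  have hlen : (m.length : ℝ) = 2 * l.length := by simp [m]; ring
  have hx : 0 ≤ m.length * β := by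
    rcases l with _ | ⟨y, _⟩
    · simp [m]
    · exact mul_nonneg (Nat.cast_nonneg _) ((norm_nonneg y).trans (hl y List.mem_cons_self))
  have hcoeff : ∀ n < 3, expCoeff m.sum n = prodExpCoeff m n := by
    intro n hn
    interval_cases n
    · simp
    · simp
    · rw [expCoeff_two, prodExpCoeff_two_append_reverse]
  calc _ ≤ 2 * ((m.length * β) ^ 3 / 3 !) * Real.exp (m.length * β) :=
        norm_sub_le_of_hasSum_of_eq_of_lt (hasSum_expCoeff m.sum) (hasSum_prodExpCoeff m) hx hcoeff
          (fun n hn ↦ norm_expCoeff_le (norm_list_sum_le_length_mul hm) (by omega))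
          (fun n hn ↦ norm_prodExpCoeff_le hm (by omega))
    _ = _ := by rw [hlen]; norm_num [factorial]; ring

end ExpCoeff

lemma exp_natCast_mul_smul {𝒜 : Type*} [NormedRing 𝒜] [NormedAlgebra ℂ 𝒜] [CompleteSpace 𝒜]
    (N : ℕ) (s : ℂ) (x : 𝒜) : exp ((N * s) • x) = exp (s • x) ^ N := by
  let := NormedAlgebra.restrictScalars ℚ ℂ 𝒜
  rw [← exp_nsmul, ← Nat.cast_smul_eq_nsmul ℂ, smul_smul]

theorem norm_exp_sub_trotterS2_le {𝒜 : Type*} [NormedRing 𝒜] [NormedAlgebra ℂ 𝒜]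
    [CompleteSpace 𝒜] {L₀ L₁ L₂ L₃ : 𝒜} {Λ τ : ℝ} (h0 : ‖L₀‖ ≤ Λ) (h1 : ‖L₁‖ ≤ Λ)
    (h2 : ‖L₂‖ ≤ Λ) (h3 : ‖L₃‖ ≤ Λ) (hτ : 0 ≤ τ) :
    ‖exp ((τ : ℂ) • (L₀ + L₁ + L₂ + L₃)) - trotterS2 L₀ L₁ L₂ L₃ τ‖ ≤
      (4 * τ * Λ) ^ 3 / 3 * Real.exp (4 * τ * Λ) := by
  set l : List 𝒜 := [((τ / 2 : ℝ) : ℂ) • L₀, ((τ / 2 : ℝ) : ℂ) • L₁, ((τ / 2 : ℝ) : ℂ) • L₂,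
    ((τ / 2 : ℝ) : ℂ) • L₃]
  have hS2 : trotterS2 L₀ L₁ L₂ L₃ τ = ((l ++ l.reverse).map exp).prod := by
    simp [l, trotterS2, mul_assoc]
  have hsum : (l ++ l.reverse).sum = (τ : ℂ) • (L₀ + L₁ + L₂ + L₃) := by
    simp [l]
    module
  have hcoef : ‖((τ / 2 : ℝ) : ℂ)‖ = τ / 2 := by
    rw [Complex.norm_real, Real.norm_of_nonneg (by positivity)]
  have hl : ∀ y ∈ l, ‖y‖ ≤ τ / 2 * Λ := by
    simp only [l, List.mem_cons, List.not_mem_nil, or_false, forall_eq_or_imp, forall_eq,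
      norm_smul, hcoef]
    exact ⟨by gcongr, by gcongr, by gcongr, by gcongr⟩
  have hx : 2 * (l.length : ℝ) * (τ / 2 * Λ) = 4 * τ * Λ := by simp [l]; ring
  simpa only [hsum, ← hS2, hx] using norm_exp_sum_sub_prod_exp_append_reverse_le l hl

theorem trotter_second_order_total_bound_general {𝒜 : Type*} [NormedRing 𝒜] [NormedAlgebra ℂ 𝒜]
    [CompleteSpace 𝒜] (L₀ L₁ L₂ L₃ : 𝒜) (Λ t : ℝ)
    (h0 : ‖L₀‖ ≤ Λ) (h1 : ‖L₁‖ ≤ Λ) (h2 : ‖L₂‖ ≤ Λ) (h3 : ‖L₃‖ ≤ Λ)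
    (ht : 0 ≤ t) (N : ℕ) (hN : 1 ≤ N) (τ : ℝ) (hτ : τ = t / N)
    (hexp : ‖exp ((τ : ℂ) • (L₀ + L₁ + L₂ + L₃))‖ ≤ 1)
    (hS : ‖trotterS2 L₀ L₁ L₂ L₃ τ‖ ≤ 1) :
    ‖exp ((t : ℂ) • (L₀ + L₁ + L₂ + L₃)) - trotterS2 L₀ L₁ L₂ L₃ τ ^ N‖ ≤
        (4 * t * Λ) ^ 3 / (3 * N ^ 2) * Real.exp (4 * t * Λ / N) ∧
      ∀ ε : ℝ, (4 * t * Λ) ^ 3 / (3 * N ^ 2) * Real.exp (4 * t * Λ / N) ≤ ε →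
        ‖exp ((t : ℂ) • (L₀ + L₁ + L₂ + L₃)) - trotterS2 L₀ L₁ L₂ L₃ τ ^ N‖ ≤ ε := by
  have hN0 : (N : ℝ) ≠ 0 := by exact_mod_cast (by omega : N ≠ 0)
  have htN : t = N * τ := by rw [hτ]; field_simp
  have hbound : ‖exp ((t : ℂ) • (L₀ + L₁ + L₂ + L₃)) - trotterS2 L₀ L₁ L₂ L₃ τ ^ N‖ ≤
      (4 * t * Λ) ^ 3 / (3 * N ^ 2) * Real.exp (4 * t * Λ / N) :=
    calc _ = ‖exp ((τ : ℂ) • (L₀ + L₁ + L₂ + L₃)) ^ N - trotterS2 L₀ L₁ L₂ L₃ τ ^ N‖ := by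
          rw [htN, Complex.ofReal_mul, Complex.ofReal_natCast, exp_natCast_mul_smul]
      _ ≤ N * ‖exp ((τ : ℂ) • (L₀ + L₁ + L₂ + L₃)) - trotterS2 L₀ L₁ L₂ L₃ τ‖ :=
          norm_pow_sub_pow_le_of_norm_le_one hexp hS N
      _ ≤ N * ((4 * τ * Λ) ^ 3 / 3 * Real.exp (4 * τ * Λ)) := by
          gcongr
          exact norm_exp_sub_trotterS2_le h0 h1 h2 h3 (hτ ▸ by positivity)
      _ = _ := by rw [hτ]; field_simp
  exact ⟨hbound, fun ε hε ↦ hbound.trans hε⟩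

/-- In a complex Banach algebra, with `‖Lₖ‖ ≤ Λ`, `t ≥ 0`, `N ≥ 1`,
`τ = t/N`, and assuming `‖exp(τ(L₀+L₁+L₂+L₃))‖ ≤ 1` and `‖S₂(τ)‖ ≤ 1`, we have
`‖exp(t(L₀+L₁+L₂+L₃)) − S₂(τ)^N‖ ≤ ((4tΛ)³/(3N²))·e^{4tΛ/N}`; in particular the error
is at most any `ε` exceeding this bound. -/
theorem trotter_second_order_total_bound {𝒜 : Type*} [NormedRing 𝒜] [NormedAlgebra ℂ 𝒜]
    [CompleteSpace 𝒜] (L₀ L₁ L₂ L₃ : 𝒜) (Λ t : ℝ) (hΛ : 0 ≤ Λ)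
    (h0 : ‖L₀‖ ≤ Λ) (h1 : ‖L₁‖ ≤ Λ) (h2 : ‖L₂‖ ≤ Λ) (h3 : ‖L₃‖ ≤ Λ)
    (ht : 0 ≤ t) (N : ℕ) (hN : 1 ≤ N) (τ : ℝ) (hτ : τ = t / N)
    (hexp : ‖exp ((τ : ℂ) • (L₀ + L₁ + L₂ + L₃))‖ ≤ 1)
    (hS : ‖trotterS2 L₀ L₁ L₂ L₃ τ‖ ≤ 1) :
    ‖exp ((t : ℂ) • (L₀ + L₁ + L₂ + L₃)) - trotterS2 L₀ L₁ L₂ L₃ τ ^ N‖ ≤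
        (4 * t * Λ) ^ 3 / (3 * N ^ 2) * Real.exp (4 * t * Λ / N) ∧
      ∀ ε : ℝ, (4 * t * Λ) ^ 3 / (3 * N ^ 2) * Real.exp (4 * t * Λ / N) ≤ ε →
        ‖exp ((t : ℂ) • (L₀ + L₁ + L₂ + L₃)) - trotterS2 L₀ L₁ L₂ L₃ τ ^ N‖ ≤ ε :=
  trotter_second_order_total_bound_general L₀ L₁ L₂ L₃ Λ t h0 h1 h2 h3 ht N hN τ hτ hexp hS
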